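/- For every n ≥ 1, applying the operator ∂_s(∂_c∂_s)^n to the quaternionic power function x ↦ x^{2n} gives the identically zero function; likewise ∂_c(∂_s∂_c)^n x^{2n} ≡ 0. For every n ≥ 0, (∂_c∂_s)^{n+1} x^{2n+1} ≡ 0 and (∂_s∂_c)^{n+1} x^{2n+1} ≡ 0. -/

import Mathlib

noncomputable section

open Quaternion

abbrev ℍq := Quaternion ℝ

/-- Spherical value of a function of a quaternionic variable. -/
def svalue (f : ℍq → ℍq) (x : ℍq) : ℍq := (f x + f (star x)) / 2

/-- Spherical derivative of a function of a quaternionic variable. -/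
def sderiv' (f : ℍq → ℍq) (x : ℍq) : ℍq := (2 * x.im)⁻¹ * (f x - f (star x))

/-- The imaginary unit `Im(x)/|Im(x)|` attached to a (non-real) quaternion. -/
def qJ (x : ℍq) : ℍq := (‖x.im‖)⁻¹ • x.im

/-- Slice (Cullen) derivative `∂_c f = (1/2)(∂/∂α − I ∂/∂β) f` at `x = α + Iβ`. -/
def cderiv (f : ℍq → ℍq) (x : ℍq) : ℍq :=
  (1/2 : ℝ) • (fderiv ℝ f x 1 - qJ x * fderiv ℝ f x (qJ x))

/-- The conjugate operator `∂̄_c f = (1/2)(∂/∂α + I ∂/∂β) f`. -/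
def cderivBar (f : ℍq → ℍq) (x : ℍq) : ℍq :=
  (1/2 : ℝ) • (fderiv ℝ f x 1 + qJ x * fderiv ℝ f x (qJ x))

/-- A circular (axially symmetric) subset of the quaternions. -/
def IsCircular (Ω : Set ℍq) : Prop :=
  ∀ x ∈ Ω, ∀ y : ℍq, y.re = x.re → ‖y.im‖ = ‖x.im‖ → y ∈ Ω

/-- A slice function on `Ω`: it is determined by the representation formula
`f(α + Iβ) = F₀(α,β) + I F₁(α,β)` with `F₀ = v_s f`, `F₁ = β ∂_s f`. -/
def IsSlice (Ω : Set ℍq) (f : ℍq → ℍq) : Prop :=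
  ∀ x ∈ Ω, ∀ y ∈ Ω, x.re = y.re → ‖x.im‖ = ‖y.im‖ →
    f x = svalue f y + x.im * sderiv' f y

/-- A slice regular function on a circular domain: a real-differentiable slice
function whose stem function is holomorphic, i.e. `∂̄_c f = 0` off the reals. -/
def IsSliceRegular (Ω : Set ℍq) (f : ℍq → ℍq) : Prop :=
  IsSlice Ω f ∧ DifferentiableOn ℝ f Ω ∧ ∀ x ∈ Ω, x.im ≠ 0 → cderivBar f x = 0

/-- Pointwise formula for the slice product `f·g = 𝓘(FG)` of two slice functions. -/
def sprod (f g : ℍq → ℍq) (x : ℍq) : ℍq :=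
  svalue f x * svalue g x + x.im * x.im * (sderiv' f x * sderiv' g x)
    + x.im * (svalue f x * sderiv' g x + sderiv' f x * svalue g x)

/-- Characteristic polynomial of `q₀`: `Δ_{q₀}(x) = x² − 2 Re(q₀) x + |q₀|²`. -/
def Delta (q₀ : ℍq) (x : ℍq) : ℍq := x ^ 2 - 2 * (q₀.re : ℍq) * x + ((‖q₀‖ ^ 2 : ℝ) : ℍq)

/-- The operator `∂_c ∂_s`. -/
def opCS (f : ℍq → ℍq) : ℍq → ℍq := cderiv (sderiv' f)

/-- The operator `∂_s ∂_c`. -/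
def opSC (f : ℍq → ℍq) : ℍq → ℍq := sderiv' (cderiv f)

/-!
Off the real axis, `x ^ m` and all its alternated derivatives have the form
`A(α, β²) + Im(x) B(α, β²)` for `x = α + Iβ`, with a polynomial stem homogeneous in `(α, β)`.
The power `x ^ m` has degree `m`, and `∂_s` and `∂_c` both lower the degree by one. Each
operator in the theorem applies `m + 1` of them to `x ^ m`, and a stem of negative degree
vanishes.
-/

open MvPolynomial

namespace MvPolynomial

theorem IsWeightedHomogeneous.eq_zero_of_neg {σ R M : Type*} [CommSemiring R] [AddCommMonoid M]
    [PartialOrder M] [IsOrderedAddMonoid M] {w : σ → M} {φ : MvPolynomial σ R} {m : M}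
    (hw : ∀ i, 0 ≤ w i) (hφ : φ.IsWeightedHomogeneous w m) (hm : m < 0) : φ = 0 :=
  hφ.eq_zero_of_no_monomials fun d hd => by
    have hweight : 0 ≤ Finsupp.weight w d := by
      rw [Finsupp.weight_apply]
      exact Finsupp.sum_nonneg fun i _ => nsmul_nonneg (hw i) _
    exact (hd ▸ hweight).not_gt hm

theorem IsWeightedHomogeneous.X_mul {σ R M : Type*} [CommSemiring R] [AddCommMonoid M]
    {w : σ → M} {φ : MvPolynomial σ R} {m n : M} {i : σ} (hφ : φ.IsWeightedHomogeneous w m)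
    (hn : w i + m = n) : (X i * φ).IsWeightedHomogeneous w n :=
  hn ▸ (isWeightedHomogeneous_X R w i).mul hφ

theorem hasFDerivAt_eval_comp {𝕜 E σ : Type*} [NontriviallyNormedField 𝕜] [NormedAddCommGroup E]
    [NormedSpace 𝕜 E] [Fintype σ] {g : E → σ → 𝕜} {g' : σ → E →L[𝕜] 𝕜} {y : E}
    (hg : ∀ i, HasFDerivAt (fun z => g z i) (g' i) y) (P : MvPolynomial σ 𝕜) :
    HasFDerivAt (fun z => eval (g z) P) (∑ i, eval (g y) (pderiv i P) • g' i) y := by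
  classical
  induction P using MvPolynomial.induction_on with
  | C a =>
    refine (hasFDerivAt_const (𝕜 := 𝕜) a y).congr_fderiv ?_ |>.congr_of_eventuallyEq (by simp)
    ext v
    simp
  | add p q hp hq =>
    refine (hp.fun_add hq).congr_fderiv ?_ |>.congr_of_eventuallyEq (by simp)
    ext v
    simp [add_mul, Finset.sum_add_distrib]
  | mul_X p i hp =>
    refine (hp.fun_mul (hg i)).congr_fderiv ?_ |>.congr_of_eventuallyEq (by simp)
    ext v
    simp [pderiv_X, Pi.single_apply, add_mul, Finset.sum_add_distrib, Finset.mul_sum, apply_ite,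
      mul_assoc]

end MvPolynomial

namespace Quaternion

theorem coe_eq_smul_one (r : ℝ) : (r : ℍq) = r • 1 := by
  rw [← coe_mul_eq_smul, mul_one]

theorem im_mul_im_self (y : ℍq) : y.im * y.im = -((‖y.im‖ ^ 2 : ℝ) : ℍq) := by
  rw [← sq, im_sq, normSq_eq_norm_mul_self, sq]

def reCLM : ℍq →L[ℝ] ℝ := (QuaternionAlgebra.reₗ _ _ _).toContinuousLinearMap

def imCLM : ℍq →L[ℝ] ℍq :=
  LinearMap.toContinuousLinearMap
    { toFun := im, map_add' := im_add, map_smul' := fun r a => by simp [im_smul] }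

@[simp] theorem reCLM_apply (y : ℍq) : reCLM y = y.re := rfl

@[simp] theorem imCLM_apply (y : ℍq) : imCLM y = y.im := rfl

end Quaternion

open Quaternion

theorem norm_im_smul_qJ {y : ℍq} (hy : y.im ≠ 0) : ‖y.im‖ • qJ y = y.im := by
  rw [qJ, smul_smul, mul_inv_cancel₀ (norm_ne_zero_iff.mpr hy), one_smul]

theorem re_qJ (y : ℍq) : (qJ y).re = 0 := by simp [qJ]

theorem im_qJ (y : ℍq) : (qJ y).im = qJ y := by simp [qJ, im_smul]

theorem qJ_mul_qJ {y : ℍq} (hy : y.im ≠ 0) : qJ y * qJ y = -1 := by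
  have hβ : ‖y.im‖ ≠ 0 := norm_ne_zero_iff.mpr hy
  have hscalar : ‖y.im‖⁻¹ * ‖y.im‖⁻¹ * ‖y.im‖ ^ 2 = 1 := by field_simp
  rw [qJ, smul_mul_smul_comm, im_mul_im_self, smul_neg, smul_coe, hscalar, Quaternion.coe_one]

theorem inner_im_qJ {y : ℍq} (hy : y.im ≠ 0) : inner ℝ y.im (qJ y) = ‖y.im‖ := by
  rw [qJ, inner_smul_right, real_inner_self_eq_norm_sq]
  field_simp [norm_ne_zero_iff.mpr hy]

def stemCoords (y : ℍq) : Fin 2 → ℝ := ![y.re, ‖y.im‖ ^ 2]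

def stemWeight : Fin 2 → ℤ := ![1, 2]

theorem stemWeight_nonneg (i : Fin 2) : 0 ≤ stemWeight i := by
  fin_cases i <;> simp [stemWeight]

def sliceFun (A B : MvPolynomial (Fin 2) ℝ) (y : ℍq) : ℍq :=
  (eval (stemCoords y) A : ℍq) + eval (stemCoords y) B • y.im

/-- `f (α + Iβ) = A(α, β²) + I B(α, β²)` off the real axis. Giving `σ = β²` the weight 2, this
says that the stem `(A, βB)` of `f` is homogeneous of degree `k` in `(α, β)`. -/
def HasHomogeneousStem (k : ℤ) (f : ℍq → ℍq) : Prop :=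
  ∃ A B : MvPolynomial (Fin 2) ℝ, A.IsWeightedHomogeneous stemWeight k ∧
    B.IsWeightedHomogeneous stemWeight (k - 1) ∧ ∀ y : ℍq, y.im ≠ 0 → f y = sliceFun A B y

theorem stemCoords_star (y : ℍq) : stemCoords (star y) = stemCoords y := by
  simp [stemCoords]

theorem sderiv'_eq_of_eq_sliceFun {f : ℍq → ℍq} {A B : MvPolynomial (Fin 2) ℝ}
    (hf : ∀ y : ℍq, y.im ≠ 0 → f y = sliceFun A B y) {y : ℍq} (hy : y.im ≠ 0) :
    sderiv' f y = eval (stemCoords y) B := by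
  have h2 : (2 : ℍq) * y.im ≠ 0 := by
    rw [two_mul, ← two_smul ℝ]
    exact smul_ne_zero two_ne_zero hy
  have hdiff : f y - f (star y) = 2 * y.im * eval (stemCoords y) B := by
    rw [hf y hy, hf (star y) (by simpa using hy), sliceFun, sliceFun, stemCoords_star, im_star,
      mul_coe_eq_smul, two_mul]
    module
  rw [sderiv', hdiff, inv_mul_cancel_left₀ h2]

theorem HasHomogeneousStem.sderiv' {k : ℤ} {f : ℍq → ℍq} (hf : HasHomogeneousStem k f) :
    HasHomogeneousStem (k - 1) (sderiv' f) := by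
  obtain ⟨A, B, -, hB, hfAB⟩ := hf
  refine ⟨B, 0, hB, isWeightedHomogeneous_zero _ _ _, fun y hy => ?_⟩
  rw [sderiv'_eq_of_eq_sliceFun hfAB hy, sliceFun, map_zero, zero_smul, add_zero]

theorem HasHomogeneousStem.eq_zero {k : ℤ} {f : ℍq → ℍq} (hf : HasHomogeneousStem k f)
    (hk : k < 0) {y : ℍq} (hy : y.im ≠ 0) : f y = 0 := by
  obtain ⟨A, B, hA, hB, hfAB⟩ := hf
  rw [hfAB y hy, sliceFun, hA.eq_zero_of_neg stemWeight_nonneg hk,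
    hB.eq_zero_of_neg stemWeight_nonneg (by omega)]
  simp

theorem self_mul_sliceFun (A B : MvPolynomial (Fin 2) ℝ) (y : ℍq) :
    y * sliceFun A B y = sliceFun (X 0 * A - X 1 * B) (A + X 0 * B) y := by
  nth_rewrite 1 [← re_add_im y]
  simp only [sliceFun, stemCoords, map_mul, map_sub, map_add, eval_X, Matrix.cons_val_zero,
    Matrix.cons_val_one, add_mul, mul_add, coe_mul_eq_smul, mul_smul_comm,
    im_mul_im_self, mul_coe_eq_smul]
  simp only [coe_eq_smul_one]
  module

theorem hasHomogeneousStem_pow (m : ℕ) : HasHomogeneousStem m (· ^ m) := by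
  induction m with
  | zero =>
    refine ⟨1, 0, isWeightedHomogeneous_one _ _, isWeightedHomogeneous_zero _ _ _, fun y _ => ?_⟩
    simp [sliceFun]
  | succ m ih =>
    obtain ⟨A, B, hA, hB, hfAB⟩ := ih
    refine ⟨X 0 * A - X 1 * B, A + X 0 * B, ?_, ?_, fun y hy => ?_⟩
    · exact (hA.X_mul (by simp [stemWeight]; ring)).sub (hB.X_mul (by simp [stemWeight]; ring))
    · rw [Nat.cast_succ, add_sub_cancel_right]
      exact hA.add (hB.X_mul (i := 0) (by simp [stemWeight]))
    · have hm : y ^ m = sliceFun A B y := hfAB y hy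
      simp only [pow_succ', hm, self_mul_sliceFun]

theorem hasFDerivAt_stemCoords (y : ℍq) (i : Fin 2) :
    HasFDerivAt (fun z => stemCoords z i) (![reCLM, 2 • (innerSL ℝ y.im).comp imCLM] i) y := by
  fin_cases i
  · exact reCLM.hasFDerivAt
  · exact imCLM.hasFDerivAt.norm_sq

theorem fderiv_sliceFun_apply (A B : MvPolynomial (Fin 2) ℝ) (y v : ℍq) :
    fderiv ℝ (sliceFun A B) y v =
      ((eval (stemCoords y) (pderiv 0 A) * v.re
        + eval (stemCoords y) (pderiv 1 A) * (2 * inner ℝ y.im v.im) : ℝ) : ℍq)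
      + (eval (stemCoords y) (pderiv 0 B) * v.re
        + eval (stemCoords y) (pderiv 1 B) * (2 * inner ℝ y.im v.im)) • y.im
      + eval (stemCoords y) B • v.im := by
  have hA := hasFDerivAt_eval_comp (hasFDerivAt_stemCoords y) A
  have hB := hasFDerivAt_eval_comp (hasFDerivAt_stemCoords y) B
  have hslice := (hA.smul_const (1 : ℍq)).fun_add (hB.fun_smul imCLM.hasFDerivAt)
  have hslice_eq : sliceFun A B =
      fun z => eval (stemCoords z) A • (1 : ℍq) + eval (stemCoords z) B • imCLM z := by
    funext z
    simp [sliceFun, coe_eq_smul_one]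
  rw [hslice_eq, hslice.fderiv]
  simp only [Fin.sum_univ_two, Fin.isValue, Matrix.cons_val_zero, Matrix.cons_val_one,
    Matrix.cons_val_fin_one, imCLM_apply, add_apply, ContinuousLinearMap.smulRight_apply,
    smul_apply, reCLM_apply, smul_eq_mul, ContinuousLinearMap.comp_apply, coe_innerSL_apply,
    nsmul_eq_mul, Nat.cast_ofNat, Quaternion.coe_add, Quaternion.coe_mul, coe_eq_smul_one,
    Algebra.mul_smul_comm, mul_one]
  module

-- On the stem, `∂_c` is `½ (∂_α - i ∂_β)`, and `∂_β = 2β ∂_σ` on functions of `σ = β²`.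
theorem cderiv_eq_sliceFun {f : ℍq → ℍq} {A B : MvPolynomial (Fin 2) ℝ}
    (hf : ∀ y : ℍq, y.im ≠ 0 → f y = sliceFun A B y) {y : ℍq} (hy : y.im ≠ 0) :
    cderiv f y = sliceFun (C (1 / 2) * (pderiv 0 A + B + X 1 * (C 2 * pderiv 1 B)))
      (C (1 / 2) * (pderiv 0 B - C 2 * pderiv 1 A)) y := by
  have hfy : f =ᶠ[nhds y] sliceFun A B :=
    Filter.eventually_of_mem ((isOpen_ne_fun imCLM.continuous continuous_const).mem_nhds hy) hf
  rw [cderiv, hfy.fderiv_eq, fderiv_sliceFun_apply, fderiv_sliceFun_apply, re_qJ, im_qJ,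
    inner_im_qJ hy]
  simp only [sliceFun, stemCoords, map_mul, map_add, map_sub, eval_C, eval_X, Fin.isValue,
    Matrix.cons_val_one, Matrix.cons_val_fin_one, re_one, im_one, inner_zero_right, mul_zero,
    mul_one, add_zero, smul_zero]
  set β := ‖y.im‖
  rw [← norm_im_smul_qJ hy]
  simp only [coe_eq_smul_one, mul_add, mul_sub, mul_smul_comm, mul_one, qJ_mul_qJ hy]
  module

theorem HasHomogeneousStem.cderiv {k : ℤ} {f : ℍq → ℍq} (hf : HasHomogeneousStem k f) :
    HasHomogeneousStem (k - 1) (cderiv f) := by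
  obtain ⟨A, B, hA, hB, hfAB⟩ := hf
  refine ⟨_, _, ?_, ?_, fun y hy => cderiv_eq_sliceFun hfAB hy⟩
  · refine (((hA.pderiv ?_).add hB).add
      (((hB.pderiv (n' := k - 3) ?_).C_mul 2).X_mul ?_)).C_mul _
    all_goals simp only [stemWeight, Matrix.cons_val_zero, Matrix.cons_val_one,
      Matrix.cons_val_fin_one]; ring
  · refine ((hB.pderiv ?_).sub ((hA.pderiv ?_).C_mul 2)).C_mul _
    all_goals simp only [stemWeight, Matrix.cons_val_zero, Matrix.cons_val_one,
      Matrix.cons_val_fin_one]; ring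

theorem HasHomogeneousStem.opCS {k : ℤ} {f : ℍq → ℍq} (hf : HasHomogeneousStem k f) :
    HasHomogeneousStem (k - 2) (opCS f) := by
  have := hf.sderiv'.cderiv
  rwa [sub_sub, one_add_one_eq_two] at this

theorem HasHomogeneousStem.opSC {k : ℤ} {f : ℍq → ℍq} (hf : HasHomogeneousStem k f) :
    HasHomogeneousStem (k - 2) (opSC f) := by
  have := hf.cderiv.sderiv'
  rwa [sub_sub, one_add_one_eq_two] at this

theorem HasHomogeneousStem.iterate {T : (ℍq → ℍq) → ℍq → ℍq}
    (hT : ∀ k f, HasHomogeneousStem k f → HasHomogeneousStem (k - 2) (T f)) {k : ℤ}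
    {f : ℍq → ℍq} (hf : HasHomogeneousStem k f) (n : ℕ) :
    HasHomogeneousStem (k - 2 * n) (T^[n] f) := by
  induction n with
  | zero => simpa using hf
  | succ n ih =>
    rw [Function.iterate_succ_apply']
    convert hT _ _ ih using 1
    push_cast
    ring

/-- alternated derivatives kill quaternionic power functions of the
appropriate degree. -/
theorem alternate_derivatives_of_powers :
    (∀ n : ℕ, 1 ≤ n → ∀ x : ℍq, x.im ≠ 0 →
        sderiv' (opCS^[n] (fun y : ℍq => y ^ (2*n))) x = 0
          ∧ cderiv (opSC^[n] (fun y : ℍq => y ^ (2*n))) x = 0)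
    ∧ (∀ n : ℕ, ∀ x : ℍq, x.im ≠ 0 →
        opCS^[n+1] (fun y : ℍq => y ^ (2*n+1)) x = 0
          ∧ opSC^[n+1] (fun y : ℍq => y ^ (2*n+1)) x = 0) := by
  refine ⟨fun n _ x hx => ⟨?_, ?_⟩, fun n x hx => ⟨?_, ?_⟩⟩
  · exact ((hasHomogeneousStem_pow (2 * n)).iterate (fun _ _ => .opCS) n).sderiv'.eq_zero
      (by omega) hx
  · exact ((hasHomogeneousStem_pow (2 * n)).iterate (fun _ _ => .opSC) n).cderiv.eq_zero
      (by omega) hx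
  · exact ((hasHomogeneousStem_pow (2 * n + 1)).iterate (fun _ _ => .opCS) (n + 1)).eq_zero
      (by omega) hx
  · exact ((hasHomogeneousStem_pow (2 * n + 1)).iterate (fun _ _ => .opSC) (n + 1)).eq_zero
      (by omega) hx
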